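/- arXiv:0911.1709 — 3 statements merged into one kernel-verified Lean document; each statement's English description precedes it below -/
import Mathlib

section
/- Let $(V_i)_{i \geq 1}$ be a sequence of submodules of a module satisfying: for all integers $0 < r < s$ and all $t \geq 0$, $V_{s+t(s-r)} \subseteq V_r + V_s$. Then for any strictly increasing sequence $I = (i_j)_{j \geq 1}$ of positive integers, there exists a finite set $J$ of indices with $|J| \leq i_2 - i_1 + 1$, containing $1$ and $2$, such that $\sum_{j=1}^\infty V_{i_j} = \sum_{j \in J} V_{i_j}$. -/
/-!
Call a set of positive integers closed if with `r < s` it contains the whole progression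
`r, s, s + (s - r), …`. For any submodule `S`, the indices `n` with `V n ≤ S` form such a set.
With `d = i₁ - i₀` the closure of `{i₀, i₁}` contains `i₀ + dℕ`; adding one further point `x`
makes the closure contain every `x + k` with `k ≥ d` and `gcd d (x - i₀) ∣ k`, by a Euclidean
descent: `x` and the lattice point just below it span a progression of smaller step
`(x - i₀) % d`, and the lattice point just above `x` plays the role of the new extra point.
Hence, besides `i₁`, it suffices to keep the first index `j` in each residue class of `i j`
modulo `d`, which makes at most `d + 1` indices.
-/

def ProgressionClosed (P : ℕ → Prop) : Prop :=
  ∀ r s t : ℕ, 0 < r → r < s → P r → P s → P (s + t * (s - r))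

namespace ProgressionClosed

variable {P : ℕ → Prop}

theorem of_le_sup {R M : Type*} [Semiring R] [AddCommMonoid M] [Module R M]
    {V : ℕ → Submodule R M}
    (h : ∀ r s t : ℕ, 0 < r → r < s → V (s + t * (s - r)) ≤ V r ⊔ V s) (S : Submodule R M) :
    ProgressionClosed (V · ≤ S) :=
  fun r s t hr hrs hVr hVs => (h r s t hr hrs).trans (sup_le hVr hVs)

theorem progression (hP : ProgressionClosed P) {r s : ℕ} (hr : 0 < r) (hrs : r < s)
    (hPr : P r) (hPs : P s) (t : ℕ) : P (r + (s - r) * t) := by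
  cases t with
  | zero => simpa using hPr
  | succ t =>
    convert hP r s t hr hrs hPr hPs using 1
    rw [mul_add, mul_comm]
    omega

theorem add_of_gcd_dvd (hP : ProgressionClosed P) {e : ℕ} (he : 0 < e) {a x k : ℕ}
    (ha : 0 < a) (hlattice : ∀ t, P (a + e * t)) (hax : a ≤ x) (hx : P x) (hek : e ≤ k)
    (hk : Nat.gcd e (x - a) ∣ k) : P (x + k) := by
  induction e using Nat.strong_induction_on generalizing a x k with
  | _ e ih =>
  set β := (x - a) % e
  set q := (x - a) / e
  have hβq : β + e * q = x - a := Nat.mod_add_div _ _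
  obtain hβ | hβ := Nat.eq_zero_or_pos β
  · have hex : e ∣ x - a := Nat.dvd_of_mod_eq_zero hβ
    obtain ⟨b, rfl⟩ : e ∣ k := by rwa [Nat.gcd_eq_left hex] at hk
    convert hlattice (q + b) using 1
    rw [mul_add]
    omega
  · have hβe : β < e := Nat.mod_lt _ he
    have hstep : ∀ t, P (x + β * t) := by
      intro t
      have := hP (a + e * q) x t (by omega) (by omega) (hlattice q) hx
      rwa [show x - (a + e * q) = β by omega, mul_comm] at this
    have hnext : P (x + (e - β)) := by
      convert hlattice (q + 1) using 1
      rw [mul_add]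
      omega
    have hgcd : Nat.gcd β (e - β) = Nat.gcd e (x - a) := by
      rw [Nat.gcd_sub_self_right hβe.le, Nat.gcd_rec e (x - a)]
    have hdvd : Nat.gcd e (x - a) ∣ e - β := hgcd ▸ Nat.gcd_dvd_right β (e - β)
    have := ih β hβe hβ (by omega) hstep (by omega) hnext (k := k - (e - β)) (by omega)
      (by rw [Nat.add_sub_cancel_left, hgcd]; exact Nat.dvd_sub hk hdvd)
    rwa [show x + (e - β) + (k - (e - β)) = x + k by omega] at this

theorem of_modEq (hP : ProgressionClosed P) {a b x y : ℕ} (ha : 0 < a) (hab : a < b)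
    (hPa : P a) (hPb : P b) (hax : a ≤ x) (hx : P x) (hxy : x ≤ y) (hmod : x ≡ y [MOD b - a]) :
    P y := by
  obtain rfl | hxy := hxy.eq_or_lt
  · exact hx
  have hdvd : b - a ∣ y - x := (Nat.modEq_iff_dvd' hxy.le).mp hmod
  have := hP.add_of_gcd_dvd (by omega) ha (hP.progression ha hab hPa hPb) hax hx
    (Nat.le_of_dvd (by omega) hdvd) ((Nat.gcd_dvd_left _ _).trans hdvd)
  rwa [Nat.add_sub_cancel' hxy.le] at this

end ProgressionClosed

theorem exists_finset_card_le_forall_exists_le_modEq (f : ℕ → ℕ) {d : ℕ} (hd : 0 < d) :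
    ∃ J : Finset ℕ, J.card ≤ d ∧ ∀ m, ∃ j ∈ J, j ≤ m ∧ f j ≡ f m [MOD d] := by
  classical
  refine ⟨(Finset.range d).image fun c => sInf {j | f j % d = c},
    Finset.card_image_le.trans (Finset.card_range d).le, fun m => ?_⟩
  have hm : m ∈ {j | f j % d = f m % d} := rfl
  exact ⟨_, Finset.mem_image_of_mem _ (Finset.mem_range.mpr (Nat.mod_lt _ hd)),
    Nat.sInf_le hm, Nat.sInf_mem ⟨m, hm⟩⟩

-- `i j` is the paper's `i_{j+1}`.
/-- If a sequence of submodules `V_i` satisfies `V_{s+t(s-r)} ⊆ V_r + V_s` for all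
`0 < r < s` and `t ≥ 0`, then for any strictly increasing sequence `i_1 < i_2 < ⋯` of
positive integers (here `i : ℕ → ℕ` with `i j` playing the role of `i_{j+1}`), there is
a finite set `J` of indices, of size at most `i_2 - i_1 + 1` and containing the first
two indices, with `∑_{j} V_{i_j} = ∑_{j ∈ J} V_{i_j}`. -/
theorem basic_sequence {R M : Type*} [Ring R] [AddCommGroup M] [Module R M]
    (V : ℕ → Submodule R M)
    (h : ∀ r s t : ℕ, 0 < r → r < s → V (s + t * (s - r)) ≤ V r ⊔ V s)
    (i : ℕ → ℕ) (hmono : StrictMono i) (hpos : 1 ≤ i 0) :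
    ∃ J : Finset ℕ, J.card ≤ i 1 - i 0 + 1 ∧ 0 ∈ J ∧ 1 ∈ J ∧
      (⨆ j : ℕ, V (i j)) = ⨆ j ∈ J, V (i j) := by
  have h01 : i 0 < i 1 := hmono Nat.zero_lt_one
  obtain ⟨J₀, hJ₀card, hJ₀⟩ :=
    exists_finset_card_le_forall_exists_le_modEq i (show 0 < i 1 - i 0 by omega)
  have h0J₀ : 0 ∈ J₀ := by
    obtain ⟨j, hj, hj0, -⟩ := hJ₀ 0
    rwa [Nat.le_zero.mp hj0] at hj
  classical
  set J := insert 1 J₀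
  have hJ : ∀ j ∈ J, V (i j) ≤ ⨆ j ∈ J, V (i j) := fun j hj => le_biSup (fun j => V (i j)) hj
  refine ⟨J, (Finset.card_insert_le _ _).trans (by omega), Finset.mem_insert_of_mem h0J₀,
    Finset.mem_insert_self _ _, le_antisymm (iSup_le fun m => ?_) (iSup₂_le fun j _ => ?_)⟩
  · obtain ⟨j, hj, hjm, hmod⟩ := hJ₀ m
    exact (ProgressionClosed.of_le_sup h _).of_modEq hpos h01 (hJ 0 (by simp [J, h0J₀]))
      (hJ 1 (by simp [J])) (hmono.monotone j.zero_le) (hJ j (by simp [J, hj]))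
      (hmono.monotone hjm) hmod
  · exact le_iSup (fun j => V (i j)) j
end

section
/- Let $d$ be a positive integer and let $S_1^{(d)}$ be the $T$-space of the free associative algebra $k_0\langle X\rangle$ generated by $S^{(d)}(x_1,\ldots,x_d)$. Then modulo $S_1^{(d)}$, $S^{(d+1)}(x_1,\ldots,x_{d+1}) \equiv S^{(d)}(x_1,\ldots,x_d)\, x_{d+1} \equiv x_{d+1}\, S^{(d)}(x_1,\ldots,x_d)$; i.e., both differences $S^{(d+1)}(x_1,\ldots,x_{d+1}) - S^{(d)}(x_1,\ldots,x_d)x_{d+1}$ and $S^{(d+1)}(x_1,\ldots,x_{d+1}) - x_{d+1}S^{(d)}(x_1,\ldots,x_d)$ lie in $S_1^{(d)}$. -/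
open scoped BigOperators

/-- The free non-unital associative algebra over `k` on countably many variables,
realized as the semigroup algebra of the free semigroup on `ℕ`. -/
abbrev FA (k : Type*) [Field k] := MonoidAlgebra k (FreeSemigroup ℕ)

/-- The generator (variable) `x_i`. -/
noncomputable def Xg (k : Type*) [Field k] (i : ℕ) : FA k :=
  MonoidAlgebra.single (FreeSemigroup.of i) 1

/-- Product of a (nonempty) list in a non-unital semiring; `0` on the empty list. -/
def lprod {A : Type*} [NonUnitalSemiring A] : List A → A
  | [] => 0
  | [a] => a
  | a :: b :: l => a * lprod (b :: l)

/-- `n`-th power in a non-unital semiring (zero for `n = 0`). -/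
def npow' {A : Type*} [NonUnitalSemiring A] (a : A) (n : ℕ) : A :=
  lprod (List.replicate n a)

/-- The full multilinear symmetrization `S^{(d)}(y_1,…,y_d) = ∑_{σ ∈ Σ_d} y_{σ(1)} ⋯ y_{σ(d)}`. -/
def Ssym {A : Type*} [NonUnitalSemiring A] (d : ℕ) (y : Fin d → A) : A :=
  ∑ σ : Equiv.Perm (Fin d), lprod (List.ofFn (fun i => y (σ i)))

/-- A T-space: a subspace closed under all substitution endomorphisms
(non-unital algebra endomorphisms). -/
def IsTSpace (k : Type*) [Field k] (V : Submodule k (FA k)) : Prop :=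
  ∀ (φ : FA k →ₙₐ[k] FA k), ∀ v ∈ V, φ v ∈ V

/-- The T-space generated by a set `S`: the span of all substitution instances
of elements of `S`. -/
noncomputable def TSpan (k : Type*) [Field k] (S : Set (FA k)) : Submodule k (FA k) :=
  Submodule.span k {a | ∃ (φ : FA k →ₙₐ[k] FA k) (s : FA k), s ∈ S ∧ a = φ s}

/-- The set of products `u * v` with `u ∈ U`, `v ∈ V`. -/
def mulSet {k : Type*} [Field k] (U V : Submodule k (FA k)) : Set (FA k) :=
  {a | ∃ u ∈ U, ∃ v ∈ V, a = u * v}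

/-- The T-spaces `S_n^{(d)}`: `S_1^{(d)}` is generated by `S^{(d)}(x_1,…,x_d)` and
`S_{n+1}^{(d)} = (S_n^{(d)} S_1^{(d)})^S`. -/
noncomputable def Sn (k : Type*) [Field k] (d : ℕ) : ℕ → Submodule k (FA k)
  | 0 => ⊥
  | 1 => TSpan k {Ssym d (fun i => Xg k i)}
  | (n+2) => TSpan k (mulSet (Sn k d (n+1)) (Sn k d 1))

/-- The T-spaces `H_n`: `H_1` is generated by `x_1^p` and `H_{n+1} = (H_n H_1)^S`. -/
noncomputable def Hn (k : Type*) [Field k] (p : ℕ) : ℕ → Submodule k (FA k)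
  | 0 => ⊥
  | 1 => TSpan k {npow' (Xg k 0) p}
  | (n+2) => TSpan k (mulSet (Hn k p (n+1)) (Hn k p 1))

/-- The word `x_1^p x_2^p ⋯ x_n^p`. -/
noncomputable def hword (k : Type*) [Field k] (p n : ℕ) : FA k :=
  lprod ((List.range n).map (fun t => npow' (Xg k t) p))

/-! Group the words `x_{σ(1)} ⋯ x_{σ(d+1)}` of `S^{(d+1)}` by the position of `x_{d+1}`. The
words starting with `x_{d+1}` add up to `x_{d+1} S^{(d)}(x_1,…,x_d)`; those in which `x_{d+1}`
directly follows `x_s` add up to `S^{(d)}(x_1,…,x_s x_{d+1},…,x_d)`, a substitution instance of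
`S^{(d)}` and hence an element of `S_1^{(d)}`. Reading words backwards, i.e. passing to the
opposite algebra, gives the other congruence. -/

open Function MulOpposite

theorem List.ofFn_comp_rev {α : Type*} {n : ℕ} (f : Fin n → α) :
    List.ofFn (f ∘ Fin.rev) = (List.ofFn f).reverse :=
  List.ext_getElem (by simp) fun i _ _ => by
    simp only [List.getElem_ofFn, comp_apply, Fin.rev, List.getElem_reverse, List.length_ofFn]
    congr 2
    omega

section lprod

variable {A : Type*} [NonUnitalSemiring A]

theorem lprod_cons (a : A) {l : List A} (hl : l ≠ []) : lprod (a :: l) = a * lprod l := by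
  cases l with
  | nil => exact absurd rfl hl
  | cons b t => rfl

theorem lprod_cons_cons (a b : A) (l : List A) : lprod (a :: b :: l) = lprod (a * b :: l) := by
  cases l with
  | nil => rfl
  | cons c t => exact (mul_assoc a b _).symm

theorem lprod_append_singleton {l : List A} (hl : l ≠ []) (a : A) :
    lprod (l ++ [a]) = lprod l * a := by
  induction l with
  | nil => exact absurd rfl hl
  | cons b t ih =>
    cases t with
    | nil => rfl
    | cons c u =>
      rw [List.cons_append, lprod_cons b (by simp), ih (by simp), lprod_cons b (by simp),
        mul_assoc]

theorem lprod_map_op_reverse (l : List A) : lprod (l.reverse.map op) = op (lprod l) := by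
  induction l with
  | nil => rfl
  | cons a t ih =>
    rcases eq_or_ne t [] with rfl | ht
    · rfl
    · rw [List.reverse_cons, List.map_append, List.map_singleton,
        lprod_append_singleton (by simpa using ht), ih, lprod_cons a ht, op_mul]

theorem map_lprod {B F : Type*} [NonUnitalSemiring B] [FunLike F A B]
    [NonUnitalRingHomClass F A B] (f : F) : ∀ l : List A, f (lprod l) = lprod (l.map f)
  | [] => map_zero f
  | [_] => rfl
  | a :: b :: l => by
    rw [lprod_cons a (List.cons_ne_nil b l), map_mul, map_lprod f (b :: l)]
    rfl

theorem lprod_ofFn_insertNth_succ (a : A) :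
    ∀ {n : ℕ} (g : Fin n → A) (t : Fin n),
      lprod (List.ofFn (Fin.insertNth t.succ a g)) = lprod (List.ofFn (update g t (g t * a)))
  | 0, _, t => t.elim0
  | n + 1, g, t => by
    rw [← Fin.cons_self_tail g]
    cases t using Fin.cases with
    | zero =>
      simp only [Fin.insertNth_succ_cons, Fin.insertNth_zero', Fin.update_cons_zero,
        Fin.cons_zero, List.ofFn_succ, Fin.cons_succ]
      exact lprod_cons_cons _ _ _
    | succ s =>
      rw [Fin.insertNth_succ_cons, Fin.cons_succ, ← Fin.cons_update, List.ofFn_succ,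
        List.ofFn_succ (f := Fin.cons _ _)]
      simp only [Fin.cons_zero, Fin.cons_succ]
      rw [lprod_cons _ (by simp), lprod_cons _ (by simp [s.pos.ne']),
        lprod_ofFn_insertNth_succ a _ s]

end lprod

section insertLastPerm

variable {d : ℕ}

def insertLastPerm (j : Fin (d + 1)) (τ : Equiv.Perm (Fin d)) : Equiv.Perm (Fin (d + 1)) :=
  (finSuccEquiv' j).trans ((Equiv.optionCongr τ).trans (finSuccEquiv' (Fin.last d)).symm)

@[simp] theorem insertLastPerm_self (j : Fin (d + 1)) (τ : Equiv.Perm (Fin d)) :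
    insertLastPerm j τ j = Fin.last d := by
  simp [insertLastPerm]

@[simp] theorem insertLastPerm_succAbove (j : Fin (d + 1)) (τ : Equiv.Perm (Fin d)) (i : Fin d) :
    insertLastPerm j τ (j.succAbove i) = (τ i).castSucc := by
  simp [insertLastPerm, Fin.succAbove_last]

theorem insertLastPerm_bijective :
    Bijective fun p : Fin (d + 1) × Equiv.Perm (Fin d) => insertLastPerm p.1 p.2 := by
  rw [Fintype.bijective_iff_injective_and_card]
  refine ⟨?_, by simp [Fintype.card_perm, Nat.factorial_succ]⟩
  rintro ⟨j, τ⟩ ⟨j', τ'⟩ h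
  simp only at h
  obtain rfl : j = j' := (insertLastPerm j' τ').injective <| by
    rw [insertLastPerm_self, ← h, insertLastPerm_self]
  obtain rfl : τ = τ' := Equiv.ext fun i => Fin.castSucc_injective _ <| by
    rw [← insertLastPerm_succAbove, h, insertLastPerm_succAbove]
  rfl

theorem snoc_comp_insertLastPerm {A : Type*} (y : Fin d → A) (a : A) (j : Fin (d + 1))
    (τ : Equiv.Perm (Fin d)) :
    Fin.snoc y a ∘ insertLastPerm j τ = Fin.insertNth j a (y ∘ τ) := by
  refine (Fin.insertNth_eq_iff.mpr ⟨by simp, funext fun i => ?_⟩).symm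
  simp [Fin.removeNth]

end insertLastPerm

section Ssym

variable {A : Type*} [NonUnitalSemiring A]

theorem Ssym_snoc_eq_sum_insertNth (d : ℕ) (y : Fin d → A) (a : A) :
    Ssym (d + 1) (Fin.snoc y a) =
      ∑ τ : Equiv.Perm (Fin d), ∑ j : Fin (d + 1),
        lprod (List.ofFn (Fin.insertNth j a (y ∘ τ))) := by
  rw [Ssym, Finset.sum_comm, ← Fintype.sum_prod_type',
    ← Fintype.sum_bijective _ insertLastPerm_bijective _ _ fun p => rfl]
  exact Fintype.sum_congr _ _ fun p => by rw [← snoc_comp_insertLastPerm]; rfl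

theorem Ssym_snoc_eq_last_mul_add {d : ℕ} (hd : 0 < d) (y : Fin d → A) (a : A) :
    Ssym (d + 1) (Fin.snoc y a) = a * Ssym d y + ∑ s : Fin d, Ssym d (update y s (y s * a)) := by
  have insert_succ (τ : Equiv.Perm (Fin d)) (t : Fin d) :
      lprod (List.ofFn (Fin.insertNth t.succ a (y ∘ τ))) =
        lprod (List.ofFn (update y (τ t) (y (τ t) * a) ∘ τ)) := by
    rw [lprod_ofFn_insertNth_succ, update_comp_equiv, Equiv.symm_apply_apply]
    rfl
  simp only [Ssym_snoc_eq_sum_insertNth, Fin.sum_univ_succ, insert_succ, Finset.sum_add_distrib]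
  congr 1
  · rw [Ssym, Finset.mul_sum]
    refine Fintype.sum_congr _ _ fun τ => ?_
    rw [Fin.insertNth_zero', List.ofFn_succ, lprod_cons _ (by simp [hd.ne'])]
    rfl
  · refine (Finset.sum_comm.trans (Fintype.sum_congr _ _ fun τ => ?_)).symm
    exact (Equiv.sum_comp τ fun s => lprod (List.ofFn (update y s (y s * a) ∘ τ))).symm

theorem Ssym_op (d : ℕ) (y : Fin d → A) : Ssym d (op ∘ y) = op (Ssym d y) := by
  rw [Ssym, Ssym, Finset.op_sum]
  refine (Equiv.sum_comp (Equiv.mulRight Fin.revPerm) _).symm.trans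
    (Fintype.sum_congr _ _ fun σ => ?_)
  rw [← lprod_map_op_reverse, ← List.ofFn_comp_rev, List.map_ofFn]
  rfl

theorem Ssym_snoc_eq_mul_last_add {d : ℕ} (hd : 0 < d) (y : Fin d → A) (a : A) :
    Ssym (d + 1) (Fin.snoc y a) = Ssym d y * a + ∑ s : Fin d, Ssym d (update y s (a * y s)) := by
  apply op_injective
  have h := Ssym_snoc_eq_last_mul_add hd (op ∘ y) (op a)
  simp only [← Fin.comp_snoc, comp_apply, ← op_mul, ← comp_update, Ssym_op] at h
  rw [h, op_add, op_mul, Finset.op_sum]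

theorem map_Ssym {B F : Type*} [NonUnitalSemiring B] [FunLike F A B]
    [NonUnitalRingHomClass F A B] (f : F) (d : ℕ) (y : Fin d → A) :
    f (Ssym d y) = Ssym d (f ∘ y) := by
  rw [Ssym, Ssym, map_sum]
  refine Fintype.sum_congr _ _ fun σ => ?_
  rw [map_lprod, List.map_ofFn]
  rfl

end Ssym

section TSpan

variable {k : Type*} [Field k]

theorem exists_nonUnitalAlgHom_Xg (Y : ℕ → FA k) :
    ∃ φ : FA k →ₙₐ[k] FA k, ∀ i, φ (Xg k i) = Y i :=
  ⟨MonoidAlgebra.liftMagma k (FreeSemigroup.lift Y), fun i => by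
    simp [Xg, MonoidAlgebra.liftMagma_apply_apply]⟩

theorem apply_mem_TSpan {S : Set (FA k)} (φ : FA k →ₙₐ[k] FA k) {s : FA k} (hs : s ∈ S) :
    φ s ∈ TSpan k S :=
  Submodule.subset_span ⟨φ, s, hs, rfl⟩

theorem Ssym_mem_Sn_one (d : ℕ) (y : Fin d → FA k) : Ssym d y ∈ Sn k d 1 := by
  obtain ⟨φ, hφ⟩ := exists_nonUnitalAlgHom_Xg (extend Fin.val y 0)
  have hy : φ ∘ (fun i : Fin d => Xg k i) = y :=
    funext fun i => (hφ i).trans (Fin.val_injective.extend_apply y 0 i)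
  rw [Sn, ← hy, ← map_Ssym]
  exact apply_mem_TSpan φ rfl

end TSpan

/-- Modulo the T-space `S_1^{(d)}`, `S^{(d+1)}(x_1,…,x_{d+1})` is congruent to both
`S^{(d)}(x_1,…,x_d) x_{d+1}` and `x_{d+1} S^{(d)}(x_1,…,x_d)`. -/
theorem Ssym_succ_mod_S1 (k : Type*) [Field k] (d : ℕ) (hd : 1 ≤ d) :
    Ssym (d + 1) (fun j => Xg k j.val) - Ssym d (fun j => Xg k j.val) * Xg k d
        ∈ Sn k d 1 ∧
    Ssym (d + 1) (fun j => Xg k j.val) - Xg k d * Ssym d (fun j => Xg k j.val)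
        ∈ Sn k d 1 := by
  have hx : (fun j : Fin (d + 1) => Xg k j.val) =
      Fin.snoc (fun j : Fin d => Xg k j.val) (Xg k d) := by
    funext j
    cases j using Fin.lastCases <;> simp
  rw [hx]
  constructor
  · rw [Ssym_snoc_eq_mul_last_add hd, add_sub_cancel_left]
    exact Submodule.sum_mem _ fun s _ => Ssym_mem_Sn_one d _
  · rw [Ssym_snoc_eq_last_mul_add hd, add_sub_cancel_left]
    exact Submodule.sum_mem _ fun s _ => Ssym_mem_Sn_one d _
end

section
/- Let $k$ be a field of prime characteristic $p$. Define $T$-spaces $H_n$ of $k_0\langle X\rangle$ by $H_1 = \{x_1^p\}^S$ and $H_{n+1} = (H_n H_1)^S$. Then for all $m, n \geq 1$, $(H_m H_n)^S = H_{m+n}$. -/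
open scoped BigOperators

/-!
Since `H_m` and `H_n` are closed under substitutions, so is the set of products `H_m H_n`;
hence `(H_m H_n)^S` is just the linear span of these products. Taking linear spans of products
is associative, so `H_{m+n+1} = (H_{m+n} H_1)^S = ((H_m H_n) H_1)^S = (H_m H_{n+1})^S`,
and the claim follows by induction on `n`.
-/

open Submodule Pointwise

section SpanMul

variable {R A : Type*} [CommSemiring R] [NonUnitalSemiring A] [Module R A]
  [SMulCommClass R A A] [IsScalarTower R A A]

def spanMul (U V : Submodule R A) : Submodule R A :=
  span R ((U : Set A) * (V : Set A))

theorem span_coe_span_mul_coe_span (S T : Set A) :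
    span R ((span R S : Set A) * (span R T : Set A)) = span R (S * T) := by
  simpa only [LinearMap.mul_apply', Set.image2_mul] using
    (map₂_eq_span_image2 (LinearMap.mul R A) (span R S) (span R T)).symm.trans
      (map₂_span_span R (LinearMap.mul R A) S T)

theorem spanMul_assoc (U V W : Submodule R A) :
    spanMul (spanMul U V) W = spanMul U (spanMul V W) := by
  unfold spanMul
  conv_lhs => rw [← W.span_eq, span_coe_span_mul_coe_span]
  conv_rhs => rw [← U.span_eq, span_coe_span_mul_coe_span]
  rw [mul_assoc]

end SpanMul

section TSpace

variable {k : Type*} [Field k]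

theorem isTSpace_TSpan (S : Set (FA k)) : IsTSpace k (TSpan k S) := by
  intro φ v hv
  refine (span_le (p := (TSpan k S).comap (φ : FA k →ₗ[k] FA k))).mpr ?_ hv
  rintro a ⟨ψ, s, hs, rfl⟩
  exact subset_span ⟨φ.comp ψ, s, hs, rfl⟩

theorem TSpan_eq_span {S : Set (FA k)} (hS : ∀ φ : FA k →ₙₐ[k] FA k, ∀ s ∈ S, φ s ∈ S) :
    TSpan k S = span k S := by
  refine le_antisymm (span_le.mpr ?_) (span_mono fun s hs => ?_)
  · rintro a ⟨φ, s, hs, rfl⟩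
    exact subset_span (hS φ s hs)
  · exact ⟨NonUnitalAlgHom.id k (FA k), s, hs, rfl⟩

theorem mulSet_eq_mul (U V : Submodule k (FA k)) :
    mulSet U V = (U : Set (FA k)) * (V : Set (FA k)) := by
  ext a
  simp only [mulSet, Set.mem_mul, SetLike.mem_coe, Set.mem_ofPred_eq, eq_comm]

theorem TSpan_mulSet {U V : Submodule k (FA k)} (hU : IsTSpace k U) (hV : IsTSpace k V) :
    TSpan k (mulSet U V) = spanMul U V := by
  rw [TSpan_eq_span, spanMul, mulSet_eq_mul]
  rintro φ _ ⟨u, hu, v, hv, rfl⟩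
  exact ⟨φ u, hU φ u hu, φ v, hV φ v hv, map_mul φ u v⟩

theorem isTSpace_Hn (p : ℕ) : ∀ n, IsTSpace k (Hn k p n)
  | 0 => by
    intro φ v hv
    rw [Hn, mem_bot] at hv ⊢
    rw [hv, map_zero]
  | 1 => by rw [Hn]; exact isTSpace_TSpan _
  | n + 2 => by rw [Hn]; exact isTSpace_TSpan _

theorem Hn_succ (p : ℕ) {m : ℕ} (hm : 1 ≤ m) :
    Hn k p (m + 1) = spanMul (Hn k p m) (Hn k p 1) := by
  obtain ⟨l, rfl⟩ := Nat.exists_eq_add_of_le' hm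
  exact (Hn.eq_3 k p l).trans (TSpan_mulSet (isTSpace_Hn p _) (isTSpace_Hn p _))

theorem spanMul_Hn (p : ℕ) {m n : ℕ} (hm : 1 ≤ m) (hn : 1 ≤ n) :
    spanMul (Hn k p m) (Hn k p n) = Hn k p (m + n) := by
  induction n, hn using Nat.le_induction with
  | base => exact (Hn_succ p hm).symm
  | succ n hn ih =>
    rw [Hn_succ p hn, ← spanMul_assoc, ih, ← add_assoc, Hn_succ p (Nat.le_add_right_of_le hm)]

end TSpace

theorem Hn_mul_general (k : Type*) [Field k] (p : ℕ) :
    ∀ m n : ℕ, 1 ≤ m → 1 ≤ n →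
      TSpan k (mulSet (Hn k p m) (Hn k p n)) = Hn k p (m + n) := by
  intro m n hm hn
  rw [TSpan_mulSet (isTSpace_Hn p m) (isTSpace_Hn p n)]
  exact spanMul_Hn p hm hn

/-- `(H_m H_n)^S = H_{m+n}` for all `m, n ≥ 1`. -/
theorem Hn_mul (k : Type*) [Field k] (p : ℕ) (hp : p.Prime) [CharP k p] :
    ∀ m n : ℕ, 1 ≤ m → 1 ≤ n →
      TSpan k (mulSet (Hn k p m) (Hn k p n)) = Hn k p (m + n) :=
  Hn_mul_general k p
end
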